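/- Let S be a semigroup such that there exists an idempotent e with fe = f for all f ∈ S, such that idempotents satisfy f₁f₂ = f₁, and such that eS is a group. Then the map π : S → E(S) sending f to f·(ef)⁻¹ (inverse taken in the group eS) is the unique semigroup homomorphism retraction from S onto its set of idempotents E(S). -/
import Mathlib


theorem stmt_5 {S : Type*} [Semigroup S] (e : S) (he : e * e = e)
    (h1 : ∀ f : S, f * e = f)
    (h2 : ∀ f₁ f₂ : S, f₁ * f₁ = f₁ → f₂ * f₂ = f₂ → f₁ * f₂ = f₁)
    (inv : S → S)
    (hinv : ∀ f : S, (∃ s, inv f = e * s) ∧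
      (e * f) * inv f = e ∧ inv f * (e * f) = e) :
    (∀ a b : S, (a * b) * inv (a * b) = (a * inv a) * (b * inv b)) ∧
    (∀ f : S, f * f = f → f * inv f = f) ∧
    (∀ f : S, (f * inv f) * (f * inv f) = f * inv f) ∧
    (∀ ρ : S → S, (∀ a b : S, ρ (a * b) = ρ a * ρ b) →
      (∀ f : S, f * f = f → ρ f = f) →
      (∀ f : S, ρ f * ρ f = ρ f) →
      ∀ f : S, ρ f = f * inv f) := by
  -- e * inv f = inv f
  have hei : ∀ f : S, e * inv f = inv f := by
    intro f
    obtain ⟨s, hs⟩ := (hinv f).1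
    rw [hs, ← mul_assoc, he]
  -- inv f * f = e
  have hfe : ∀ f : S, inv f * f = e := by
    intro f
    calc inv f * f = (inv f * e) * f := by rw [h1]
      _ = inv f * (e * f) := mul_assoc _ _ _
      _ = e := (hinv f).2.2
  -- π is idempotent-valued
  have hpi : ∀ f : S, (f * inv f) * (f * inv f) = f * inv f := by
    intro f
    calc (f * inv f) * (f * inv f) = f * ((inv f * f) * inv f) := by
          simp only [mul_assoc]
      _ = f * (e * inv f) := by rw [hfe]
      _ = f * inv f := by rw [hei]
  -- π f = f for idempotent f
  have hfix : ∀ f : S, f * f = f → f * inv f = f := by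
    intro f hf
    have hef : e * f = e := h2 e f he hf
    have h3 : (e * f) * inv f = e := (hinv f).2.1
    rw [hef, hei] at h3
    rw [h3, h1]
  -- π (a * b) = π a
  have hab : ∀ a b : S, (a * b) * inv (a * b) = a * inv a := by
    intro a b
    have key : (a * inv a) * ((a * b) * inv (a * b)) = (a * b) * inv (a * b) := by
      calc (a * inv a) * ((a * b) * inv (a * b))
          = a * ((inv a * a) * (b * inv (a * b))) := by simp only [mul_assoc]
        _ = a * (e * (b * inv (a * b))) := by rw [hfe]
        _ = ((a * e) * b) * inv (a * b) := by simp only [mul_assoc]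
        _ = (a * b) * inv (a * b) := by rw [h1]
    have h4 : (a * inv a) * ((a * b) * inv (a * b)) = a * inv a :=
      h2 _ _ (hpi a) (hpi (a * b))
    rw [key] at h4
    exact h4
  refine ⟨?_, hfix, hpi, ?_⟩
  · intro a b
    rw [hab a b]
    exact (h2 _ _ (hpi a) (hpi b)).symm
  · intro ρ hhom hret hrid f
    have hre : ρ e = e := hret e he
    have h5 : ρ (inv f) * ρ f = e := by
      rw [← hhom, hfe, hre]
    have h6 : ρ f * ρ (inv f) = f * inv f := by
      rw [← hhom]
      exact hret _ (hpi f)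
    calc ρ f = ρ f * e := (h1 _).symm
      _ = ρ f * (ρ (inv f) * ρ f) := by rw [h5]
      _ = (ρ f * ρ (inv f)) * ρ f := (mul_assoc _ _ _).symm
      _ = (f * inv f) * ρ f := by rw [h6]
      _ = f * inv f := h2 _ _ (hpi f) (hrid f)
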